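/- Let K ∈ O(Λ) be a Kantor involution relative to ν, i.e., an involution for which there is an orthogonal direct-sum decomposition ν⊥ = L ⊕ M, where M is spanned by two norm-0 vectors with inner product 1, such that K acts as −1 on L, fixes M pointwise, and fixes ν. Then the induced action of K on V = Λ/2Λ is the transvection in ν̄: x̄ ↦ x̄ + (x̄·ν̄)ν̄. -/

import Mathlib

noncomputable section

/- Entry-evaluation lemmas for 10-component vectors. -/
section VecEval
variable {α : Type*}
@[simp] lemma vec10_0 (a0 a1 a2 a3 a4 a5 a6 a7 a8 a9 : α) : (![a0,a1,a2,a3,a4,a5,a6,a7,a8,a9] : Fin 10 → α) 0 = a0 := rfl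
@[simp] lemma vec10_1 (a0 a1 a2 a3 a4 a5 a6 a7 a8 a9 : α) : (![a0,a1,a2,a3,a4,a5,a6,a7,a8,a9] : Fin 10 → α) 1 = a1 := rfl
@[simp] lemma vec10_2 (a0 a1 a2 a3 a4 a5 a6 a7 a8 a9 : α) : (![a0,a1,a2,a3,a4,a5,a6,a7,a8,a9] : Fin 10 → α) 2 = a2 := rfl
@[simp] lemma vec10_3 (a0 a1 a2 a3 a4 a5 a6 a7 a8 a9 : α) : (![a0,a1,a2,a3,a4,a5,a6,a7,a8,a9] : Fin 10 → α) 3 = a3 := rfl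
@[simp] lemma vec10_4 (a0 a1 a2 a3 a4 a5 a6 a7 a8 a9 : α) : (![a0,a1,a2,a3,a4,a5,a6,a7,a8,a9] : Fin 10 → α) 4 = a4 := rfl
@[simp] lemma vec10_5 (a0 a1 a2 a3 a4 a5 a6 a7 a8 a9 : α) : (![a0,a1,a2,a3,a4,a5,a6,a7,a8,a9] : Fin 10 → α) 5 = a5 := rfl
@[simp] lemma vec10_6 (a0 a1 a2 a3 a4 a5 a6 a7 a8 a9 : α) : (![a0,a1,a2,a3,a4,a5,a6,a7,a8,a9] : Fin 10 → α) 6 = a6 := rfl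
@[simp] lemma vec10_7 (a0 a1 a2 a3 a4 a5 a6 a7 a8 a9 : α) : (![a0,a1,a2,a3,a4,a5,a6,a7,a8,a9] : Fin 10 → α) 7 = a7 := rfl
@[simp] lemma vec10_8 (a0 a1 a2 a3 a4 a5 a6 a7 a8 a9 : α) : (![a0,a1,a2,a3,a4,a5,a6,a7,a8,a9] : Fin 10 → α) 8 = a8 := rfl
@[simp] lemma vec10_9 (a0 a1 a2 a3 a4 a5 a6 a7 a8 a9 : α) : (![a0,a1,a2,a3,a4,a5,a6,a7,a8,a9] : Fin 10 → α) 9 = a9 := rfl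
end VecEval

/-- The underlying rational vector space `ℚ¹⁰`; coordinates `0,…,7` are the `E₈`-part
`x₁,…,x₈`, coordinate `8` is `y` and coordinate `9` is `z`. -/
abbrev Vec : Type := Fin 10 → ℚ

/-- The bilinear form associated to the quadratic form
`(x₁,…,x₈;y,z)² = −x₁²−⋯−x₈²+2yz`. -/
def bil (x y : Vec) : ℚ :=
  x 8 * y 9 + x 9 * y 8 -
    (x 0 * y 0 + x 1 * y 1 + x 2 * y 2 + x 3 * y 3 +
     x 4 * y 4 + x 5 * y 5 + x 6 * y 6 + x 7 * y 7)

lemma bil_add_left (x y z : Vec) : bil (x + y) z = bil x z + bil y z := by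
  simp only [bil, Pi.add_apply]; ring

lemma bil_smul_left (c : ℚ) (x z : Vec) : bil (c • x) z = c * bil x z := by
  simp only [bil, Pi.smul_apply, smul_eq_mul]; ring

lemma bil_comm (x y : Vec) : bil x y = bil y x := by
  simp only [bil]; ring

lemma bil_add_right (x y z : Vec) : bil x (y + z) = bil x y + bil x z := by
  simp only [bil, Pi.add_apply]; ring

lemma bil_smul_right (c : ℚ) (x z : Vec) : bil x (c • z) = c * bil x z := by
  simp only [bil, Pi.smul_apply, smul_eq_mul]; ring

/-- Reflection in a vector `r` of norm `−2`, as a linear map:  `x ↦ x + (x·r)r`. -/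
def reflMap (r : Vec) : Vec →ₗ[ℚ] Vec where
  toFun x := x + bil x r • r
  map_add' x y := by
    show (x + y) + bil (x + y) r • r = (x + bil x r • r) + (y + bil y r • r)
    rw [bil_add_left, add_smul]; abel
  map_smul' c x := by
    show (c • x) + bil (c • x) r • r = (RingHom.id ℚ) c • (x + bil x r • r)
    rw [bil_smul_left]; simp [smul_add, smul_smul]

lemma reflMap_invol (r : Vec) (hr : bil r r = -2) : Function.Involutive (reflMap r) := by
  intro x
  show (x + bil x r • r) + bil (x + bil x r • r) r • r = x
  rw [bil_add_left, bil_smul_left, hr]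
  have h : bil x r + bil x r * (-2) = -(bil x r) := by ring
  rw [h, neg_smul]
  abel

/-- Reflection in a root `r` (a vector of norm `−2`), as a linear automorphism of `ℚ¹⁰`:
`x ↦ x + (x·r)r`. -/
def reflG (r : Vec) (hr : bil r r = -2) : Vec ≃ₗ[ℚ] Vec :=
  { reflMap r with
    invFun := reflMap r
    left_inv := reflMap_invol r hr
    right_inv := reflMap_invol r hr }

/-- integrality of the first eight coordinates -/
def lowInt (x : Vec) : Prop := ∀ i : Fin 10, i.val < 8 → ∃ n : ℤ, x i = n

/-- the first eight coordinates all lie in `ℤ + ½` -/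
def lowHalf (x : Vec) : Prop := ∀ i : Fin 10, i.val < 8 → ∃ n : ℤ, x i = n + 1/2

/-- the sum `x₁ + ⋯ + x₈` of the first eight coordinates -/
def sum8 (x : Vec) : ℚ := x 0 + x 1 + x 2 + x 3 + x 4 + x 5 + x 6 + x 7

lemma bil_sub_left (x y z : Vec) : bil (x - y) z = bil x z - bil y z := by
  simp only [bil, Pi.sub_apply]; ring

lemma bil_sub_right (x y z : Vec) : bil x (y - z) = bil x y - bil x z := by
  simp only [bil, Pi.sub_apply]; ring

/-- Membership in the Enriques lattice `Λ` (the "even" coordinate system):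
`y, z ∈ ℤ`, and `x₁,…,x₈` are either all integers or all in `ℤ + ½`,
with `x₁ + ⋯ + x₈` even. -/
def mem (x : Vec) : Prop :=
  (∃ n : ℤ, x 8 = n) ∧ (∃ n : ℤ, x 9 = n) ∧
    (lowInt x ∨ lowHalf x) ∧ (∃ k : ℤ, sum8 x = 2 * k)

/-- `g` is an isometry of the lattice `Λ`: a linear automorphism of the ambient
space which maps `Λ` bijectively onto itself and preserves the bilinear form.
(The group `O(Λ)` is the group of all such `g`.) -/
def IsIsometry (g : Vec ≃ₗ[ℚ] Vec) : Prop :=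
  (∀ x : Vec, mem x ↔ mem (g x)) ∧ ∀ x y : Vec, bil (g x) (g y) = bil x y

/-- the vector `(0,…,0;1,1)`, a positive-norm vector singling out the future cone -/
def eU : Vec := ![0,0,0,0,0,0,0,0,1,1]

/-- `v` lies in the future cone: it has positive norm and lies in the same
component of `{v : v·v > 0}` as `(0,…,0;1,1)`. -/
def InFuture (v : Vec) : Prop := 0 < bil v v ∧ 0 < bil v eU

/-- `g` preserves the future cone; `O↑(Λ)` is the set of isometries with this property. -/
def PreservesFuture (g : Vec ≃ₗ[ℚ] Vec) : Prop := ∀ v : Vec, InFuture v → InFuture (g v)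

/-- A null vector: a primitive lattice vector of norm `0` which is
future-directed, i.e. pairs positively with `(0,…,0;1,1)`. -/
def IsNull (v : Vec) : Prop :=
  mem v ∧ bil v v = 0 ∧ 0 < bil v eU ∧
    ∀ (k : ℤ) (w : Vec), mem w → v = (k : ℚ) • w → k = 1 ∨ k = -1

/-- the null vector `ρ = (0,…,0;1,0)` -/
def ρ : Vec := ![0,0,0,0,0,0,0,0,1,0]

/-- the root `ν = (½,½,½,½,½,½,½,½;0,0)` -/
def ν : Vec := ![1/2,1/2,1/2,1/2,1/2,1/2,1/2,1/2,0,0]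

def f1 : Vec := ![1,-1,0,0,0,0,0,0,0,0]
def f2 : Vec := ![0,1,-1,0,0,0,0,0,0,0]
def f3 : Vec := ![0,0,1,-1,0,0,0,0,0,0]
def f4 : Vec := ![0,0,0,1,-1,0,0,0,0,0]
def f5 : Vec := ![0,0,0,0,1,-1,0,0,0,0]
def f6 : Vec := ![0,0,0,0,0,1,-1,0,0,0]
def f7 : Vec := ![0,0,0,0,0,0,1,-1,1,0]
def f8 : Vec := ![-1/2,-1/2,-1/2,-1/2,1/2,1/2,1/2,1/2,0,0]
def f9 : Vec := ![0,0,0,0,0,0,0,0,-1,1]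

lemma ν_norm : bil ν ν = -2 := by norm_num [bil, ν]
lemma f1_norm : bil f1 f1 = -2 := by norm_num [bil, f1]
lemma f2_norm : bil f2 f2 = -2 := by norm_num [bil, f2]
lemma f3_norm : bil f3 f3 = -2 := by norm_num [bil, f3]
lemma f4_norm : bil f4 f4 = -2 := by norm_num [bil, f4]
lemma f5_norm : bil f5 f5 = -2 := by norm_num [bil, f5]
lemma f6_norm : bil f6 f6 = -2 := by norm_num [bil, f6]
lemma f7_norm : bil f7 f7 = -2 := by norm_num [bil, f7]
lemma f8_norm : bil f8 f8 = -2 := by norm_num [bil, f8]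
lemma f9_norm : bil f9 f9 = -2 := by norm_num [bil, f9]

/-- A Kantor involution relative to `ν`: an involution `K ∈ O(Λ)` fixing `ν`,
for which there is an orthogonal direct-sum decomposition `ν⊥ = L ⊕ M`, where
`M` is spanned by two norm-`0` vectors `e, f` with `e·f = 1`, such that `K`
acts as `−1` on `L` and fixes `M` pointwise. -/
def IsKantor (K : Vec ≃ₗ[ℚ] Vec) : Prop :=
  IsIsometry K ∧ K * K = 1 ∧ K ν = ν ∧
    ∃ e f : Vec, mem e ∧ mem f ∧ bil e ν = 0 ∧ bil f ν = 0 ∧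
      bil e e = 0 ∧ bil f f = 0 ∧ bil e f = 1 ∧ K e = e ∧ K f = f ∧
      ∀ x : Vec, mem x → bil x ν = 0 →
        ∃ (a : Vec) (m n : ℤ), mem a ∧ bil a ν = 0 ∧ K a = -a ∧
          x = a + (m : ℚ) • e + (n : ℚ) • f

/-!
`K + 1` is twice the orthogonal projection onto `M ⊕ ℚν`. On `M = ⟨e, f⟩`, where `e·f = 1`,
this projection is `x ↦ (x·f)e + (x·e)f`, which maps `Λ` into `Λ`; on `ℚν` it is
`x ↦ -(x·ν)/2 · ν` since `ν·ν = -2`. Hence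
`Kx - x - (x·ν)ν = 2((x·f)e + (x·e)f - x - (x·ν)ν) ∈ 2Λ`. The first claim is read off the
defining decomposition on `ν⊥ ∩ Λ`, and extends to `Λ` through `2x + (x·ν)ν ∈ ν⊥ ∩ Λ`.
-/

lemma lowInt_or_lowHalf_iff {x : Vec} :
    lowInt x ∨ lowHalf x ↔ ∃ k : ℤ, ∀ i : Fin 10, i.val < 8 → ∃ n : ℤ, x i = n + k / 2 := by
  constructor
  · rintro (h | h)
    · exact ⟨0, fun i hi => by simpa using h i hi⟩
    · exact ⟨1, fun i hi => by simpa using h i hi⟩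
  · rintro ⟨k, h⟩
    obtain ⟨j, rfl | rfl⟩ := Int.even_or_odd' k
    · refine Or.inl fun i hi => ?_
      obtain ⟨n, hn⟩ := h i hi
      exact ⟨n + j, by rw [hn]; push_cast; ring⟩
    · refine Or.inr fun i hi => ?_
      obtain ⟨n, hn⟩ := h i hi
      exact ⟨n + j, by rw [hn]; push_cast; ring⟩

lemma sum8_add (x y : Vec) : sum8 (x + y) = sum8 x + sum8 y := by
  simp only [sum8, Pi.add_apply]; ring

lemma sum8_neg (x : Vec) : sum8 (-x) = -sum8 x := by
  simp only [sum8, Pi.neg_apply]; ring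

def enriquesLattice : AddSubgroup Vec where
  carrier := {x | mem x}
  zero_mem' := ⟨⟨0, by simp⟩, ⟨0, by simp⟩, Or.inl fun _ _ => ⟨0, by simp⟩, ⟨0, by simp [sum8]⟩⟩
  add_mem' := by
    rintro x y ⟨⟨a, ha⟩, ⟨b, hb⟩, hx, ⟨s, hs⟩⟩ ⟨⟨c, hc⟩, ⟨d, hd⟩, hy, ⟨t, ht⟩⟩
    obtain ⟨k, hk⟩ := lowInt_or_lowHalf_iff.1 hx
    obtain ⟨l, hl⟩ := lowInt_or_lowHalf_iff.1 hy
    refine ⟨⟨a + c, by simp [ha, hc]⟩, ⟨b + d, by simp [hb, hd]⟩,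
      lowInt_or_lowHalf_iff.2 ⟨k + l, fun i hi => ?_⟩, ⟨s + t, by simp [sum8_add, hs, ht]; ring⟩⟩
    obtain ⟨n, hn⟩ := hk i hi
    obtain ⟨m, hm⟩ := hl i hi
    exact ⟨n + m, by simp only [Pi.add_apply, hn, hm]; push_cast; ring⟩
  neg_mem' := by
    rintro x ⟨⟨a, ha⟩, ⟨b, hb⟩, hx, ⟨s, hs⟩⟩
    obtain ⟨k, hk⟩ := lowInt_or_lowHalf_iff.1 hx
    refine ⟨⟨-a, by simp [ha]⟩, ⟨-b, by simp [hb]⟩,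
      lowInt_or_lowHalf_iff.2 ⟨-k, fun i hi => ?_⟩, ⟨-s, by simp [sum8_neg, hs]⟩⟩
    obtain ⟨n, hn⟩ := hk i hi
    exact ⟨-n, by simp only [Pi.neg_apply, hn]; push_cast; ring⟩

local notation "Λ" => enriquesLattice

lemma ν_mem : ν ∈ Λ := by
  refine ⟨⟨0, by simp [ν]⟩, ⟨0, by simp [ν]⟩, Or.inr fun i hi => ⟨0, ?_⟩,
    ⟨2, by norm_num [sum8, ν]⟩⟩
  fin_cases i <;> simp_all [ν]

-- `(⊥ : Subring ℚ)` is `ℤ`, which makes integrality arguments closure arguments.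
lemma smul_mem_of_mem_bot {q : ℚ} (hq : q ∈ (⊥ : Subring ℚ)) {x : Vec} (hx : x ∈ Λ) :
    q • x ∈ Λ := by
  obtain ⟨n, rfl⟩ := Subring.mem_bot.1 hq
  rw [Int.cast_smul_eq_zsmul]
  exact zsmul_mem hx n

lemma bil_mem_bot_of_forall_mem_bot {x y : Vec} (hx : ∀ i, x i ∈ (⊥ : Subring ℚ))
    (hy : ∀ i, y i ∈ (⊥ : Subring ℚ)) : bil x y ∈ (⊥ : Subring ℚ) := by
  unfold bil
  apply_rules [add_mem, sub_mem, mul_mem]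

lemma bil_ν_mem_bot {x : Vec} (hx : x ∈ Λ) : bil x ν ∈ (⊥ : Subring ℚ) := by
  obtain ⟨-, -, -, ⟨k, hk⟩⟩ := hx
  refine Subring.mem_bot.2 ⟨-k, ?_⟩
  simp only [sum8] at hk
  simp only [bil, ν, vec10_0, vec10_1, vec10_2, vec10_3, vec10_4, vec10_5, vec10_6, vec10_7,
    vec10_8, vec10_9]
  push_cast
  linarith

lemma exists_forall_sub_smul_ν_mem_bot {x : Vec} (hx : x ∈ Λ) :
    ∃ k : ℤ, ∀ i, (x - (k : ℚ) • ν) i ∈ (⊥ : Subring ℚ) := by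
  obtain ⟨⟨a, ha⟩, ⟨b, hb⟩, hl, -⟩ := hx
  obtain ⟨k, hk⟩ := lowInt_or_lowHalf_iff.1 hl
  refine ⟨k, fun i => Subring.mem_bot.2 ?_⟩
  by_cases hi : i.val < 8
  · obtain ⟨n, hn⟩ := hk i hi
    have hν : ν i = 1 / 2 := by fin_cases i <;> simp_all [ν]
    exact ⟨n, by simp only [Pi.sub_apply, Pi.smul_apply, smul_eq_mul, hn, hν]; ring⟩
  · obtain rfl | rfl : i = 8 ∨ i = 9 := by omega
    · exact ⟨a, by simp [ha, ν]⟩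
    · exact ⟨b, by simp [hb, ν]⟩

lemma bil_mem_bot {x y : Vec} (hx : x ∈ Λ) (hy : y ∈ Λ) : bil x y ∈ (⊥ : Subring ℚ) := by
  obtain ⟨k, hk⟩ := exists_forall_sub_smul_ν_mem_bot hx
  obtain ⟨l, hl⟩ := exists_forall_sub_smul_ν_mem_bot hy
  have hy' : y - (l : ℚ) • ν ∈ Λ := sub_mem hy (smul_mem_of_mem_bot (intCast_mem _ l) ν_mem)
  have hsplit : bil x y = bil (x - (k : ℚ) • ν) (y - (l : ℚ) • ν) + l * bil x ν
      + k * bil (y - (l : ℚ) • ν) ν := by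
    simp only [bil_sub_left, bil_sub_right, bil_smul_left, bil_smul_right, bil_comm ν y]
    ring
  rw [hsplit]
  exact add_mem (add_mem (bil_mem_bot_of_forall_mem_bot hk hl)
    (mul_mem (intCast_mem _ l) (bil_ν_mem_bot hx)))
    (mul_mem (intCast_mem _ k) (bil_ν_mem_bot hy'))

lemma bil_eq_zero_of_apply_eq_neg {K : Vec ≃ₗ[ℚ] Vec} (hK : ∀ x y, bil (K x) (K y) = bil x y)
    {a b : Vec} (ha : K a = -a) (hb : K b = b) : bil a b = 0 := by
  have h := hK a b
  rw [ha, hb, ← neg_one_smul ℚ a, bil_smul_left] at h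
  linarith

namespace IsKantor

variable {K : Vec ≃ₗ[ℚ] Vec}

lemma exists_apply_add_self_of_bil_ν_eq_zero (hK : IsKantor K) :
    ∃ e f : Vec, e ∈ Λ ∧ f ∈ Λ ∧ bil e ν = 0 ∧ bil f ν = 0 ∧
      ∀ y ∈ Λ, bil y ν = 0 → K y + y = (2 : ℚ) • (bil y f • e + bil y e • f) := by
  obtain ⟨⟨-, hbil⟩, -, -, e, f, he, hf, heν, hfν, hee, hff, hef, hKe, hKf, hsplit⟩ := hK
  refine ⟨e, f, he, hf, heν, hfν, fun y hy hyν => ?_⟩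
  obtain ⟨a, m, n, -, -, hKa, rfl⟩ := hsplit y hy hyν
  have hae : bil a e = 0 := bil_eq_zero_of_apply_eq_neg hbil hKa hKe
  have haf : bil a f = 0 := bil_eq_zero_of_apply_eq_neg hbil hKa hKf
  simp only [bil_add_left, bil_smul_left, hae, haf, hee, hff, hef, bil_comm f e, map_add,
    map_smul, hKa, hKe, hKf]
  module

lemma exists_apply_add_self (hK : IsKantor K) :
    ∃ e f : Vec, e ∈ Λ ∧ f ∈ Λ ∧
      ∀ x ∈ Λ, K x + x + bil x ν • ν = (2 : ℚ) • (bil x f • e + bil x e • f) := by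
  obtain ⟨e, f, he, hf, heν, hfν, hM⟩ := hK.exists_apply_add_self_of_bil_ν_eq_zero
  refine ⟨e, f, he, hf, fun x hx => ?_⟩
  have hKν : K ν = ν := hK.2.2.1
  set y := (2 : ℚ) • x + bil x ν • ν
  have hy : y ∈ Λ := add_mem (smul_mem_of_mem_bot (intCast_mem _ 2) hx)
    (smul_mem_of_mem_bot (bil_ν_mem_bot hx) ν_mem)
  have hyν : bil y ν = 0 := by
    simp only [y, bil_add_left, bil_smul_left, ν_norm]; ring
  have hKy := hM y hy hyν
  simp only [y, map_add, map_smul, hKν, bil_add_left, bil_smul_left, bil_comm ν e,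
    bil_comm ν f, heν, hfν] at hKy
  apply smul_right_injective Vec (two_ne_zero (α := ℚ))
  linear_combination (norm := module) hKy

end IsKantor

/-- A Kantor involution `K` relative to `ν` acts on `V = Λ/2Λ`
as the transvection in `ν̄`, i.e. `x̄ ↦ x̄ + (x̄·ν̄)ν̄`: for every lattice vector
`x`, `K x ≡ x + (x·ν)ν (mod 2Λ)`. -/
theorem kantor_acts_as_transvection :
    ∀ K : Vec ≃ₗ[ℚ] Vec, IsKantor K →
      ∀ x : Vec, mem x →
        ∃ w : Vec, mem w ∧ K x - x - bil x ν • ν = (2 : ℚ) • w := by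
  intro K hK x hx
  obtain ⟨e, f, he, hf, hKx⟩ := hK.exists_apply_add_self
  refine ⟨bil x f • e + bil x e • f - x - bil x ν • ν, ?_, ?_⟩
  · exact sub_mem (sub_mem (add_mem (smul_mem_of_mem_bot (bil_mem_bot hx hf) he)
      (smul_mem_of_mem_bot (bil_mem_bot hx he) hf)) hx)
      (smul_mem_of_mem_bot (bil_ν_mem_bot hx) ν_mem)
  · linear_combination (norm := module) hKx x hx
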